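/- arXiv:2603.27635 — 2 statements merged into one kernel-verified Lean document; each statement's English description precedes it below -/
import Mathlib

section
/- Let N ≥ 1 be an integer and let ε_1, …, ε_n be integers with ε_i ≥ N for all i. Then the Lebesgue measure of the fundamental interval I_n(ε_1, …, ε_n) equals N^n/(q_n(q_n + q_{n−1})), where q_n, q_{n−1} are the convergent denominators built from ε_1, …, ε_n. -/
open MeasureTheory Filter Set
open scoped ENNReal

/-- The `N`-expansion map `T_N : [0,1] → [0,1]`,
`T_N x = N/x - ⌊N/x⌋` for `x ≠ 0`, `T_N 0 = 0`. -/
noncomputable def TN (N : ℕ) (x : ℝ) : ℝ :=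
  if x = 0 then 0 else (N : ℝ) / x - (⌊(N : ℝ) / x⌋ : ℝ)

/-- `digit N n x` is the `(n+1)`-st digit `ε_{n+1}(x)` of the `N`-expansion of `x`,
i.e. `ε_m(x) = digit N (m-1) x` for `m ≥ 1`. -/
noncomputable def digit (N : ℕ) (n : ℕ) (x : ℝ) : ℤ :=
  ⌊(N : ℝ) / ((TN N)^[n] x)⌋

/-- The set `E_M` of irrationals in `(0,1)` all of whose `N`-expansion digits lie in
`{N, …, M}`. -/
noncomputable def EM (N M : ℕ) : Set ℝ :=
  {x | x ∈ Set.Ioo (0 : ℝ) 1 ∧ Irrational x ∧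
    ∀ n : ℕ, (N : ℤ) ≤ digit N n x ∧ digit N n x ≤ (M : ℤ)}

/-- The set `F_{α,N}` of irrationals in `(0,1)` all of whose `N`-expansion digits
are at least `α`. -/
noncomputable def Fset (N : ℕ) (α : ℝ) : Set ℝ :=
  {x | x ∈ Set.Ioo (0 : ℝ) 1 ∧ Irrational x ∧ ∀ n : ℕ, α ≤ (digit N n x : ℝ)}

/-- The set `F_N` of irrationals in `(0,1)` whose `N`-expansion digits tend to infinity. -/
noncomputable def FNset (N : ℕ) : Set ℝ :=
  {x | x ∈ Set.Ioo (0 : ℝ) 1 ∧ Irrational x ∧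
    Filter.Tendsto (fun n => digit N n x) Filter.atTop Filter.atTop}

/-- Convergent denominators of the `N`-expansion with digit sequence `ε`
(where `ε i` is the `(i+1)`-st digit `ε_{i+1}`), shifted by one:
`qden N ε (n+1) = q_n`, so `qden N ε 0 = q_{-1} = 0`, `qden N ε 1 = q_0 = 1`,
and `q_n = ε_n q_{n-1} + N q_{n-2}`. -/
def qden (N : ℕ) (ε : ℕ → ℤ) : ℕ → ℤ
  | 0 => 0
  | 1 => 1
  | (n + 2) => ε n * qden N ε (n + 1) + (N : ℤ) * qden N ε n

/-- Convergent numerators of the `N`-expansion with digit sequence `ε`, shifted by one: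
`pnum N ε (n+1) = p_n`, so `pnum N ε 0 = p_{-1} = 1`, `pnum N ε 1 = p_0 = 0`,
and `p_n = ε_n p_{n-1} + N p_{n-2}`. -/
def pnum (N : ℕ) (ε : ℕ → ℤ) : ℕ → ℤ
  | 0 => 1
  | 1 => 0
  | (n + 2) => ε n * pnum N ε (n + 1) + (N : ℤ) * pnum N ε n

/-- The fundamental interval `I_n(ε_1, …, ε_n)`: irrationals in `(0,1)` whose first `n`
`N`-expansion digits are `ε 0, …, ε (n-1)` (i.e. `ε_i(x) = ε (i-1)` for `1 ≤ i ≤ n`). -/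
noncomputable def fundInterval (N : ℕ) (n : ℕ) (ε : ℕ → ℤ) : Set ℝ :=
  {x | x ∈ Set.Ioo (0 : ℝ) 1 ∧ Irrational x ∧ ∀ i < n, digit N i x = ε i}

/-!
Reading off the first digit, `x` has digits `ε₁, …, εₙ₊₁` exactly when `x = N / (ε₁ + y)` with
`y = T_N x` having digits `ε₂, …, εₙ₊₁`. The map `y ↦ N / (c + y)` is a bijection of `ℝ` that
preserves rationality and sends open intervals in `[0, ∞)` to open intervals, so by induction
`I_n(ε)` is the open interval with endpoints `h 0 = p_n / q_n` and
`h 1 = (p_n + p_{n-1}) / (q_n + q_{n-1})`, minus the rationals, where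
`h t = N / (ε₁ + N / (ε₂ + ⋯ + N / (εₙ + t)))`. Its length is
`|p_{n-1} q_n - p_n q_{n-1}| / (q_n (q_n + q_{n-1})) = N^n / (q_n (q_n + q_{n-1}))`.
-/

section Denominators

variable {N : ℕ} {ε : ℕ → ℤ}

lemma qden_nonneg_and_pos (hε : ∀ i, 0 < ε i) (n : ℕ) :
    0 ≤ qden N ε n ∧ 0 < qden N ε (n + 1) := by
  induction n with
  | zero => simp [qden]
  | succ n ih =>
    refine ⟨ih.2.le, ?_⟩
    simp only [qden]
    have := mul_pos (hε n) ih.2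
    have := mul_nonneg (Int.natCast_nonneg N) ih.1
    linarith

lemma qden_nonneg (hε : ∀ i, 0 < ε i) (n : ℕ) : 0 ≤ qden N ε n :=
  (qden_nonneg_and_pos hε n).1

lemma qden_succ_pos (hε : ∀ i, 0 < ε i) (n : ℕ) : 0 < qden N ε (n + 1) :=
  (qden_nonneg_and_pos hε n).2

lemma pnum_succ_eq_mul_qden_shift (n : ℕ) :
    pnum N ε (n + 1) = N * qden N (fun i => ε (i + 1)) n := by
  induction n using Nat.twoStepInduction with
  | zero => simp [pnum, qden]
  | one => simp [pnum, qden]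
  | more n ih₁ ih₂ =>
    simp only [pnum, qden] at ih₂ ⊢
    linear_combination ε (n + 1) * ih₂ + (N : ℤ) * ih₁

lemma qden_succ_eq_shift (n : ℕ) :
    qden N ε (n + 1) = ε 0 * qden N (fun i => ε (i + 1)) n + pnum N (fun i => ε (i + 1)) n := by
  induction n using Nat.twoStepInduction with
  | zero => simp [pnum, qden]
  | one => simp [pnum, qden]
  | more n ih₁ ih₂ =>
    simp only [pnum, qden] at ih₂ ⊢
    linear_combination ε (n + 1) * ih₂ + (N : ℤ) * ih₁

lemma pnum_mul_qden_sub (n : ℕ) :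
    pnum N ε n * qden N ε (n + 1) - pnum N ε (n + 1) * qden N ε n = (-(N : ℤ)) ^ n := by
  induction n with
  | zero => simp [pnum, qden]
  | succ n ih =>
    simp only [pnum, qden, pow_succ] at ih ⊢
    linear_combination (-(N : ℤ)) * ih

end Denominators

section ExpansionMap

variable {N : ℕ}

lemma digit_zero (x : ℝ) : digit N 0 x = ⌊(N : ℝ) / x⌋ := rfl

lemma digit_succ (i : ℕ) (x : ℝ) : digit N (i + 1) x = digit N i (TN N x) := rfl

lemma TN_eq_fract {x : ℝ} (hx : x ≠ 0) : TN N x = Int.fract ((N : ℝ) / x) := by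
  rw [TN, if_neg hx, Int.self_sub_floor]

lemma TN_mem_Ioo_of_irrational (hN : N ≠ 0) {x : ℝ} (hx : Irrational x) :
    TN N x ∈ Ioo 0 1 ∧ Irrational (TN N x) := by
  have hNx : Irrational ((N : ℝ) / x) := hx.natCast_div hN
  rw [TN_eq_fract hx.ne_zero]
  refine ⟨⟨Int.fract_pos.mpr (hNx.ne_int _), Int.fract_lt_one _⟩, ?_⟩
  rw [← Int.self_sub_floor]
  exact hNx.sub_intCast _

lemma fundInterval_succ (hN : N ≠ 0) {ε : ℕ → ℤ} (hε₀ : (N : ℤ) ≤ ε 0) (n : ℕ) :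
    fundInterval N (n + 1) ε =
      (fun y => (N : ℝ) / (ε 0 + y)) '' fundInterval N n (fun i => ε (i + 1)) := by
  have hN' : (N : ℝ) ≠ 0 := Nat.cast_ne_zero.mpr hN
  ext x
  constructor
  · rintro ⟨⟨hx₀, -⟩, hx, hdigits⟩
    refine ⟨TN N x, ⟨(TN_mem_Ioo_of_irrational hN hx).1, (TN_mem_Ioo_of_irrational hN hx).2,
      fun i hi => by rw [← digit_succ]; exact hdigits (i + 1) (by omega)⟩, ?_⟩
    have hfloor : ⌊(N : ℝ) / x⌋ = ε 0 := hdigits 0 n.succ_pos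
    show (N : ℝ) / (ε 0 + TN N x) = x
    rw [TN_eq_fract hx₀.ne', ← hfloor, Int.floor_add_fract, div_div_cancel₀ hN']
  · rintro ⟨y, ⟨⟨hy₀, hy₁⟩, hy, hdigits⟩, rfl⟩
    have hNz : (N : ℝ) < ε 0 + y := by
      have : ((N : ℤ) : ℝ) ≤ ε 0 := Int.cast_le.mpr hε₀
      push_cast at this
      linarith
    have hz : (N : ℝ) / ((N : ℝ) / (ε 0 + y)) = ε 0 + y := div_div_cancel₀ hN'
    have hfloor : ⌊(ε 0 : ℝ) + y⌋ = ε 0 := by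
      rw [Int.floor_intCast_add, Int.floor_eq_zero_iff.mpr ⟨hy₀.le, hy₁⟩, add_zero]
    have hpos : (0 : ℝ) < N := by positivity
    have hTN : TN N ((N : ℝ) / (ε 0 + y)) = y := by
      rw [TN_eq_fract (div_pos hpos (hpos.trans hNz)).ne', hz, Int.fract_intCast_add,
        Int.fract_eq_self.mpr ⟨hy₀.le, hy₁⟩]
    refine ⟨⟨div_pos hpos (hpos.trans hNz), (div_lt_one (hpos.trans hNz)).mpr hNz⟩,
      (hy.intCast_add _).natCast_div hN, ?_⟩
    rintro (_ | i) hi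
    · rw [digit_zero, hz, hfloor]
    · rw [digit_succ, hTN]
      exact hdigits i (by omega)

end ExpansionMap

/-- `invBranch N ε n t = N / (ε 0 + N / (ε 1 + ⋯ + N / (ε (n - 1) + t)))` is the point whose
first `n` digits are `ε 0, …, ε (n - 1)` and which `T_N^n` sends to `t`. -/
noncomputable def invBranch (N : ℕ) : (ℕ → ℤ) → ℕ → ℝ → ℝ
  | _, 0, t => t
  | ε, n + 1, t => N / (ε 0 + invBranch N (fun i => ε (i + 1)) n t)

section InverseBranch

variable {N : ℕ}

lemma invBranch_nonneg {ε : ℕ → ℤ} (hε : ∀ i, 0 ≤ ε i) (n : ℕ) {t : ℝ} (ht : 0 ≤ t) :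
    0 ≤ invBranch N ε n t := by
  induction n generalizing ε with
  | zero => exact ht
  | succ n ih =>
    have := ih (fun i => hε (i + 1))
    have : (0 : ℝ) ≤ ε 0 := by exact_mod_cast hε 0
    simp only [invBranch]
    positivity

lemma invBranch_eq {ε : ℕ → ℤ} (hε : ∀ i, 0 < ε i) (n : ℕ) {t : ℝ} (ht : 0 ≤ t) :
    invBranch N ε n t =
      (pnum N ε (n + 1) + t * pnum N ε n) / (qden N ε (n + 1) + t * qden N ε n) := by
  induction n generalizing ε with
  | zero => simp [invBranch, pnum, qden]
  | succ n ih =>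
    set ε' : ℕ → ℤ := fun i => ε (i + 1)
    have hden : (0 : ℝ) < qden N ε' (n + 1) + t * qden N ε' n := by
      have hε' : ∀ i, 0 < ε' i := fun i => hε (i + 1)
      have : (0 : ℝ) < qden N ε' (n + 1) := by exact_mod_cast qden_succ_pos hε' n
      have : (0 : ℝ) ≤ qden N ε' n := by exact_mod_cast qden_nonneg hε' n
      positivity
    have hp₁ : pnum N ε (n + 1 + 1) = N * qden N ε' (n + 1) := pnum_succ_eq_mul_qden_shift _
    have hp₀ : pnum N ε (n + 1) = N * qden N ε' n := pnum_succ_eq_mul_qden_shift _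
    have hq₁ : qden N ε (n + 1 + 1) = ε 0 * qden N ε' (n + 1) + pnum N ε' (n + 1) :=
      qden_succ_eq_shift _
    have hq₀ : qden N ε (n + 1) = ε 0 * qden N ε' n + pnum N ε' n := qden_succ_eq_shift _
    rw [invBranch, ih (fun i => hε (i + 1)), add_div' _ _ _ hden.ne', div_div_eq_mul_div,
      hp₁, hp₀, hq₁, hq₀]
    push_cast
    congr 1 <;> ring

lemma invBranch_one_sub_invBranch_zero {ε : ℕ → ℤ} (hε : ∀ i, 0 < ε i) (n : ℕ) :
    invBranch N ε n 1 - invBranch N ε n 0 =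
      (-(N : ℝ)) ^ n / (qden N ε (n + 1) * (qden N ε (n + 1) + qden N ε n)) := by
  have hq : (0 : ℝ) < qden N ε (n + 1) := by exact_mod_cast qden_succ_pos hε n
  have hq' : (0 : ℝ) ≤ qden N ε n := by exact_mod_cast qden_nonneg hε n
  have hdet : ((pnum N ε n * qden N ε (n + 1) - pnum N ε (n + 1) * qden N ε n : ℤ) : ℝ) =
      (-(N : ℝ)) ^ n := by
    rw [pnum_mul_qden_sub]; push_cast; ring
  rw [invBranch_eq hε n zero_le_one, invBranch_eq hε n le_rfl, ← hdet]
  push_cast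
  field_simp
  ring

end InverseBranch

lemma div_mem_uIoo_iff {N A B x : ℝ} (hN : 0 < N) (hA : 0 < A) (hB : 0 < B) :
    N / x ∈ uIoo A B ↔ x ∈ uIoo (N / A) (N / B) := by
  wlog hAB : A ≤ B generalizing A B
  · rw [uIoo_comm, this hB hA (le_of_not_ge hAB), uIoo_comm]
  rw [uIoo_of_le hAB, uIoo_of_ge (div_le_div_of_nonneg_left hN.le hA hAB), mem_Ioo, mem_Ioo]
  have key {x : ℝ} (hx : 0 < x) : A < N / x ∧ N / x < B ↔ N / B < x ∧ x < N / A := by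
    rw [lt_div_comm₀ hA hx, div_lt_comm₀ hx hB, and_comm]
  constructor
  · intro h
    exact (key ((div_pos_iff_of_pos_left hN).mp (hA.trans h.1))).mp h
  · intro h
    exact (key ((div_pos hN hB).trans h.1)).mpr h

lemma sub_mem_uIoo_iff {x c a b : ℝ} : x - c ∈ uIoo a b ↔ x ∈ uIoo (c + a) (c + b) := by
  rw [← Ioo_min_max, ← Ioo_min_max, sub_mem_Ioo_iff_left, ← min_add_add_right,
    ← max_add_add_right, add_comm a, add_comm b]

lemma image_div_add_uIoo_diff_range_ratCast {N : ℕ} (hN : N ≠ 0) {c : ℤ} {a b : ℝ}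
    (ha : 0 < c + a) (hb : 0 < c + b) :
    (fun y => (N : ℝ) / (c + y)) '' (uIoo a b \ range ((↑) : ℚ → ℝ)) =
      uIoo (N / (c + a)) (N / (c + b)) \ range ((↑) : ℚ → ℝ) := by
  have hN' : (N : ℝ) ≠ 0 := Nat.cast_ne_zero.mpr hN
  -- `y ↦ N / (c + y)` is a bijection of `ℝ` (junk values included), inverse to `x ↦ N / x - c`
  rw [image_eq_preimage_of_inverse (f := fun y => (N : ℝ) / (c + y))
    (g := fun x => N / x - c) (fun y => by simp [div_div_cancel₀ hN'])
    (fun x => by simp [div_div_cancel₀ hN'])]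
  ext x
  simp only [mem_preimage, Set.mem_sdiff, mem_range, sub_mem_uIoo_iff,
    div_mem_uIoo_iff (Nat.cast_pos.mpr (Nat.pos_of_ne_zero hN)) ha hb]
  refine and_congr_right fun _ => not_congr ⟨?_, ?_⟩
  · rintro ⟨q, hq⟩
    refine ⟨N / (q + c), ?_⟩
    push_cast
    rw [hq, sub_add_cancel, div_div_cancel₀ hN']
  · rintro ⟨q, rfl⟩
    exact ⟨N / q - c, by push_cast; rfl⟩

lemma fundInterval_eq_uIoo_diff_range_ratCast {N : ℕ} (hN : N ≠ 0) {ε : ℕ → ℤ}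
    (hε : ∀ i, (N : ℤ) ≤ ε i) (n : ℕ) :
    fundInterval N n ε =
      uIoo (invBranch N ε n 0) (invBranch N ε n 1) \ range ((↑) : ℚ → ℝ) := by
  induction n generalizing ε with
  | zero =>
    ext x
    simp [fundInterval, invBranch, Irrational]
  | succ n ih =>
    have hε₀ : (0 : ℝ) < ε 0 := by
      exact_mod_cast (Int.natCast_pos.mpr (Nat.pos_of_ne_zero hN)).trans_le (hε 0)
    have hnonneg : ∀ i, 0 ≤ ε (i + 1) := fun i => (Int.natCast_nonneg N).trans (hε (i + 1))
    rw [fundInterval_succ hN (hε 0), ih (fun i => hε (i + 1)),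
      image_div_add_uIoo_diff_range_ratCast hN
        (add_pos_of_pos_of_nonneg hε₀ (invBranch_nonneg hnonneg n le_rfl))
        (add_pos_of_pos_of_nonneg hε₀ (invBranch_nonneg hnonneg n zero_le_one))]
    rfl

/-- Exact length of a fundamental interval:
`|I_n(ε_1, …, ε_n)| = N^n / (q_n (q_n + q_{n-1}))`
(recall `qden N ε (n+1) = q_n`). -/
theorem stmt_12 (N : ℕ) (hN : 1 ≤ N) (n : ℕ) (ε : ℕ → ℤ) (hε : ∀ i, (N : ℤ) ≤ ε i) :
    volume (fundInterval N n ε) =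
      ENNReal.ofReal ((N : ℝ) ^ n /
        ((qden N ε (n + 1) : ℝ) * ((qden N ε (n + 1) : ℝ) + (qden N ε n : ℝ)))) := by
  have hε_pos : ∀ i, 0 < ε i := fun i => (Int.natCast_pos.mpr hN).trans_le (hε i)
  have hq : (0 : ℝ) < qden N ε (n + 1) := by exact_mod_cast qden_succ_pos hε_pos n
  have hq' : (0 : ℝ) ≤ qden N ε n := by exact_mod_cast qden_nonneg hε_pos n
  rw [fundInterval_eq_uIoo_diff_range_ratCast (Nat.one_le_iff_ne_zero.mp hN) hε n,
    measure_sdiff_null ((countable_range _).measure_zero _), Real.volume_uIoo,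
    invBranch_one_sub_invBranch_zero hε_pos, abs_div, abs_pow, abs_neg, Nat.abs_cast,
    abs_of_pos (by positivity)]
end

section
/- Let N ≥ 1 and M ≥ N be integers, let s ∈ (0,1], and let q, q' be real numbers with q > 0 and q' ≥ 0. Then Σ_{k=N}^{M} ((kq + Nq')(( k+1)q + Nq'))^{−s} ≥ ((N+1)^{1−s} / (N^s · q^s · (q+q')^s)) · (1 − N(q+q') / ((M+1)q + Nq')). -/
open MeasureTheory Filter Set
open scoped ENNReal

/-! With `a k = k q + N q'`, an arithmetic progression of step `q`, every term satisfies
`(a k a (k+1))^(-s) = (a k a (k+1))^(1-s) / (a k a (k+1)) ≥ (a N a (N+1))^(1-s) / (a k a (k+1))`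
because `s ≤ 1`, and `∑ 1 / (a k a (k+1))` telescopes to `(1 / a N - 1 / a (M+1)) / q`.
It remains to use `a N = N (q + q')` and `a (N+1) ≥ (N+1) q`. -/

theorem Int.sum_Icc_sub_succ {G : Type*} [AddCommGroup G] (f : ℤ → G) {N M : ℤ}
    (hNM : N ≤ M + 1) : ∑ k ∈ Finset.Icc N M, (f k - f (k + 1)) = f N - f (M + 1) := by
  induction M, (show N - 1 ≤ M by omega) using Int.leInduction with
  | base => simp
  | succ M hM ih =>
    rw [← Finset.insert_Icc_right_eq_Icc_add_one (by omega), Finset.sum_insert (by simp),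
      ih (by omega)]
    abel

theorem Real.sum_Icc_one_div_mul_affine {q c : ℝ} (hq : 0 < q) {N M : ℤ} (hNM : N ≤ M + 1)
    (hc : 0 < N * q + c) :
    ∑ k ∈ Finset.Icc N M, 1 / ((k * q + c) * ((k + 1) * q + c)) =
      (1 / (N * q + c) - 1 / ((M + 1) * q + c)) / q := by
  set f : ℤ → ℝ := fun k => 1 / (k * q + c) with hf
  have hterm : ∀ k ∈ Finset.Icc N M,
      1 / ((k * q + c) * ((k + 1) * q + c)) = (f k - f (k + 1)) / q := by
    intro k hk
    have hNk : (N : ℝ) ≤ k := by exact_mod_cast (Finset.mem_Icc.1 hk).1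
    have hk_pos : 0 < k * q + c := by nlinarith
    rw [hf]
    push_cast
    rw [show ((k : ℝ) + 1) * q + c = k * q + c + q by ring]
    field_simp
    ring
  rw [Finset.sum_congr rfl hterm, ← Finset.sum_div, Int.sum_Icc_sub_succ f hNM, hf]
  push_cast
  rfl

theorem Real.rpow_one_sub_div_le_rpow_neg {x₀ x s : ℝ} (hx₀ : 0 < x₀) (hx : x₀ ≤ x) (hs : s ≤ 1) :
    x₀ ^ (1 - s) / x ≤ x ^ (-s) := by
  rw [show -s = 1 - s - 1 by ring, Real.rpow_sub_one (hx₀.trans_le hx).ne']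
  gcongr
  linarith

theorem Real.rpow_one_sub_mul_sum_le_sum_rpow_neg {ι : Type*} (t : Finset ι) (b : ι → ℝ)
    {x₀ s : ℝ} (hx₀ : 0 < x₀) (hb : ∀ i ∈ t, x₀ ≤ b i) (hs : s ≤ 1) :
    x₀ ^ (1 - s) * ∑ i ∈ t, 1 / b i ≤ ∑ i ∈ t, b i ^ (-s) := by
  rw [Finset.mul_sum]
  refine Finset.sum_le_sum fun i hi => ?_
  rw [mul_one_div]
  exact Real.rpow_one_sub_div_le_rpow_neg hx₀ (hb i hi) hs

theorem Real.rpow_one_sub_eq_div_rpow {x : ℝ} (hx : 0 < x) (s : ℝ) : x ^ (1 - s) = x / x ^ s := by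
  rw [Real.rpow_sub hx, Real.rpow_one]

theorem Real.add_one_rpow_div_le {n q q' s : ℝ} (hn : 0 < n) (hq : 0 < q) (hq' : 0 ≤ q')
    (hs : s ≤ 1) :
    (n + 1) ^ (1 - s) / (n ^ s * q ^ s * (q + q') ^ s) ≤
      ((n * q + n * q') * ((n + 1) * q + n * q')) ^ (1 - s) / (q * (n * q + n * q')) := by
  have hq_add : 0 < q + q' := by linarith
  calc (n + 1) ^ (1 - s) / (n ^ s * q ^ s * (q + q') ^ s)
      = ((n + 1) * q) ^ (1 - s) * (n * (q + q')) ^ (1 - s) / (q * (n * (q + q'))) := by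
        rw [Real.mul_rpow (by positivity) hq.le, Real.mul_rpow hn.le hq_add.le,
          Real.rpow_one_sub_eq_div_rpow hq, Real.rpow_one_sub_eq_div_rpow hn,
          Real.rpow_one_sub_eq_div_rpow hq_add]
        field_simp
    _ ≤ ((n + 1) * q + n * q') ^ (1 - s) * (n * (q + q')) ^ (1 - s) / (q * (n * (q + q'))) := by
        gcongr
        exact le_add_of_nonneg_right (by positivity)
    _ = _ := by
        rw [← Real.mul_rpow (by positivity) (by positivity)]
        ring_nf

theorem stmt_17_general (N M : ℤ) (hN : 1 ≤ N) (hNM : N ≤ M) (s : ℝ) (hs1 : s ≤ 1)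
    (q q' : ℝ) (hq : 0 < q) (hq' : 0 ≤ q') :
    ((N : ℝ) + 1) ^ (1 - s) / ((N : ℝ) ^ s * q ^ s * (q + q') ^ s) *
        (1 - (N : ℝ) * (q + q') / (((M : ℝ) + 1) * q + (N : ℝ) * q')) ≤
      ∑ k ∈ Finset.Icc N M,
        (((k : ℝ) * q + (N : ℝ) * q') * (((k : ℝ) + 1) * q + (N : ℝ) * q')) ^ (-s) := by
  have hN_pos : (0 : ℝ) < N := by exact_mod_cast hN
  have hNq_le_Mq : (N : ℝ) * q ≤ M * q := by gcongr
  have hfirst_pos : 0 < (N : ℝ) * q + N * q' := by positivity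
  have hfirst_le : ∀ k ∈ Finset.Icc N M, ((N : ℝ) * q + N * q') * ((N + 1) * q + N * q') ≤
      ((k : ℝ) * q + N * q') * ((k + 1) * q + N * q') := fun k hk => by
    have hNk : (N : ℝ) ≤ k := by exact_mod_cast (Finset.mem_Icc.1 hk).1
    gcongr
    linarith [mul_le_mul_of_nonneg_right hNk hq.le]
  have hsum := Real.rpow_one_sub_mul_sum_le_sum_rpow_neg (Finset.Icc N M) _
    (by positivity) hfirst_le hs1
  rw [Real.sum_Icc_one_div_mul_affine hq (by omega) hfirst_pos] at hsum
  have hM_pos : 0 < ((M : ℝ) + 1) * q + N * q' := by linarith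
  calc _ ≤ ((N * q + N * q') * ((N + 1) * q + N * q')) ^ (1 - s) / (q * (N * q + N * q')) *
        (1 - N * (q + q') / ((M + 1) * q + N * q')) := by
        gcongr ?_ * _
        · rw [sub_nonneg, div_le_one hM_pos]
          linarith
        · exact Real.add_one_rpow_div_le hN_pos hq hq' hs1
    _ = _ := by field_simp
    _ ≤ _ := hsum

/-- Key summation estimate: for integers `M ≥ N ≥ 1`, `s ∈ (0,1]`, and reals
`q > 0`, `q' ≥ 0`,
`∑_{k=N}^{M} ((kq + Nq')((k+1)q + Nq'))^{-s}`
`≥ ((N+1)^{1-s} / (N^s q^s (q+q')^s)) · (1 - N(q+q') / ((M+1)q + Nq'))`. -/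
theorem stmt_17 (N M : ℤ) (hN : 1 ≤ N) (hNM : N ≤ M) (s : ℝ) (hs : 0 < s) (hs1 : s ≤ 1)
    (q q' : ℝ) (hq : 0 < q) (hq' : 0 ≤ q') :
    ((N : ℝ) + 1) ^ (1 - s) / ((N : ℝ) ^ s * q ^ s * (q + q') ^ s) *
        (1 - (N : ℝ) * (q + q') / (((M : ℝ) + 1) * q + (N : ℝ) * q')) ≤
      ∑ k ∈ Finset.Icc N M,
        (((k : ℝ) * q + (N : ℝ) * q') * (((k : ℝ) + 1) * q + (N : ℝ) * q')) ^ (-s) :=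
  stmt_17_general N M hN hNM s hs1 q q' hq hq'
end
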